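/- Let s ∈ (0,1), α ∈ (0,1), c > 0, and fix ε > 0. For d > 1/2 define f(d) := (2/s)[ 2 d^{−s} − (d − 1/2)^{−s} − (d + 1/2)^{−s} ] + (c ε/(1−α))[ 2 d^{1−α} − (d − 1/2)^{1−α} − (d + 1/2)^{1−α} ]. Then lim_{d→+∞} d^{1+α} f(d) = c α ε / 4. In particular, there exists D = D(s, α, c, ε) > 1/2 such that f(d) > 0 for all d ≥ D. -/

import Mathlib

/-! Writing `d ± 1/2 = d (1 ± t)` with `t = 1/(2d)`, each bracket in `f(d)` is
`d^p (2 - (1 - t)^p - (1 + t)^p) ≈ -p(p-1) d^p t²`, by L'Hôpital's rule applied twice.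
For `p = -s` this is `O(d^{-s-2})`, and for `p = 1 - α` it is `≈ α(1-α)/4 · d^{-1-α}`,
which dominates: hence `d^{1+α} f(d) → cαε/4 > 0`. -/

open Set Filter Topology

noncomputable section

/-- The function `f(d) = ζ_E(1/2) - ζ_E(0)` computed explicitly for
`E = (0,1/2) ∪ (d,d+1/2)`. -/
def fEL (s α c ε d : ℝ) : ℝ :=
  (2 / s) * (2 * d ^ (-s) - (d - 1 / 2) ^ (-s) - (d + 1 / 2) ^ (-s))
    + (c * ε / (1 - α)) *
        (2 * d ^ (1 - α) - (d - 1 / 2) ^ (1 - α) - (d + 1 / 2) ^ (1 - α))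

lemma hasDerivAt_one_add_rpow (p : ℝ) {x : ℝ} (hx : 0 < 1 + x) :
    HasDerivAt (fun t : ℝ => (1 + t) ^ p) (p * (1 + x) ^ (p - 1)) x := by
  simpa using ((hasDerivAt_id x).const_add 1).rpow_const (p := p) (Or.inl hx.ne')

lemma hasDerivAt_one_sub_rpow (p : ℝ) {x : ℝ} (hx : 0 < 1 - x) :
    HasDerivAt (fun t : ℝ => (1 - t) ^ p) (-(p * (1 - x) ^ (p - 1))) x := by
  simpa using ((hasDerivAt_id x).const_sub 1).rpow_const (p := p) (Or.inl hx.ne')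

lemma ContinuousAt.tendsto_nhdsWithin_of_eq {X Y : Type*} [TopologicalSpace X]
    [TopologicalSpace Y] {f : X → Y} {a : X} {y : Y} {s : Set X} (hf : ContinuousAt f a)
    (h : f a = y) : Tendsto f (𝓝[s] a) (𝓝 y) :=
  h ▸ hf.tendsto.mono_left nhdsWithin_le_nhds

lemma continuousAt_one_sub_rpow_add_one_add_rpow (q : ℝ) :
    ContinuousAt (fun t : ℝ => (1 - t) ^ q + (1 + t) ^ q) 0 :=
  (ContinuousAt.rpow_const (by fun_prop) (by norm_num)).add
    (ContinuousAt.rpow_const (by fun_prop) (by norm_num))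

theorem tendsto_two_sub_one_sub_rpow_sub_one_add_rpow_div_sq (p : ℝ) :
    Tendsto (fun t : ℝ => (2 - (1 - t) ^ p - (1 + t) ^ p) / t ^ 2) (𝓝[>] 0)
      (𝓝 (-(p * (p - 1)))) := by
  have hbase : ∀ x ∈ Ioo (0 : ℝ) 1, 0 < 1 - x ∧ 0 < 1 + x := fun x hx =>
    ⟨by linarith [hx.2], by linarith [hx.1]⟩
  have hderiv₁ : ∀ x ∈ Ioo (0 : ℝ) 1,
      HasDerivAt (fun t => 2 - (1 - t) ^ p - (1 + t) ^ p)
        (p * (1 - x) ^ (p - 1) - p * (1 + x) ^ (p - 1)) x := fun x hx => by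
    refine (((hasDerivAt_one_sub_rpow p (hbase x hx).1).const_sub 2).sub
      (hasDerivAt_one_add_rpow p (hbase x hx).2)).congr_deriv ?_
    ring
  have hderiv₂ : ∀ x ∈ Ioo (0 : ℝ) 1,
      HasDerivAt (fun t => p * (1 - t) ^ (p - 1) - p * (1 + t) ^ (p - 1))
        (-(p * (p - 1)) * ((1 - x) ^ (p - 2) + (1 + x) ^ (p - 2))) x := fun x hx => by
    refine (((hasDerivAt_one_sub_rpow (p - 1) (hbase x hx).1).const_mul p).sub
      ((hasDerivAt_one_add_rpow (p - 1) (hbase x hx).2).const_mul p)).congr_deriv ?_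
    rw [show p - 1 - 1 = p - 2 by ring]
    ring
  have hquot : Tendsto (fun t => (p * (1 - t) ^ (p - 1) - p * (1 + t) ^ (p - 1)) / (2 * t))
      (𝓝[>] 0) (𝓝 (-(p * (p - 1)))) := by
    refine HasDerivAt.lhopital_zero_right_on_Ioo one_pos hderiv₂
      (fun x _ => by simpa using (hasDerivAt_id x).const_mul (2 : ℝ))
      (fun _ _ => two_ne_zero) ?_ ?_ ?_
    · exact ContinuousAt.tendsto_nhdsWithin_of_eq (by fun_prop (disch := norm_num)) (by simp)
    · exact ContinuousAt.tendsto_nhdsWithin_of_eq (by fun_prop) (by simp)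
    · exact (((continuousAt_one_sub_rpow_add_one_add_rpow (p - 2)).const_mul _).div_const 2
        ).tendsto_nhdsWithin_of_eq (by norm_num; ring)
  refine HasDerivAt.lhopital_zero_right_on_Ioo one_pos hderiv₁
    (fun x _ => by simpa using hasDerivAt_pow 2 x) (fun x hx => by simp [hx.1.ne']) ?_ ?_ hquot
  · exact ContinuousAt.tendsto_nhdsWithin_of_eq (by fun_prop (disch := norm_num)) (by norm_num)
  · exact ContinuousAt.tendsto_nhdsWithin_of_eq (by fun_prop) (by simp)

theorem tendsto_rpow_mul_two_mul_rpow_sub_rpow_sub_rpow (p : ℝ) :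
    Tendsto (fun d : ℝ => d ^ (2 - p) * (2 * d ^ p - (d - 1 / 2) ^ p - (d + 1 / 2) ^ p))
      atTop (𝓝 (-(p * (p - 1)) / 4)) := by
  have hsubst : Tendsto (fun d : ℝ => (2 * d)⁻¹) atTop (𝓝[>] 0) :=
    tendsto_inv_atTop_nhdsGT_zero.comp (tendsto_id.const_mul_atTop two_pos)
  refine ((tendsto_two_sub_one_sub_rpow_sub_one_add_rpow_div_sq p).comp hsubst).div_const 4
    |>.congr' ?_
  filter_upwards [eventually_ge_atTop (1 : ℝ)] with d hd
  have hd0 : 0 < d := one_pos.trans_le hd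
  have ht : (2 * d)⁻¹ ≤ 1 := inv_le_one_of_one_le₀ (by linarith)
  have hminus : d - 1 / 2 = d * (1 - (2 * d)⁻¹) := by field_simp
  have hplus : d + 1 / 2 = d * (1 + (2 * d)⁻¹) := by field_simp
  have hpow : d ^ (2 - p) * d ^ p = d ^ 2 := by
    rw [← Real.rpow_add hd0, sub_add_cancel, Real.rpow_two]
  rw [hminus, hplus, Real.mul_rpow hd0.le (by linarith), Real.mul_rpow hd0.le (by positivity)]
  calc _ = d ^ 2 * (2 - (1 - (2 * d)⁻¹) ^ p - (1 + (2 * d)⁻¹) ^ p) := by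
        simp only [Function.comp_apply]; field_simp; ring
    _ = _ := by rw [← hpow]; ring

theorem tendsto_rpow_mul_fEL {s α : ℝ} (c ε : ℝ) (hs : 0 < s) (hα : α < 1) :
    Tendsto (fun d : ℝ => d ^ (1 + α) * fEL s α c ε d) atTop (𝓝 (c * α * ε / 4)) := by
  have hkernel : Tendsto (fun d : ℝ => d ^ (1 + α) *
      (2 * d ^ (-s) - (d - 1 / 2) ^ (-s) - (d + 1 / 2) ^ (-s))) atTop (𝓝 0) := by
    have hdecay : Tendsto (fun d : ℝ => d ^ (α - 1 - s)) atTop (𝓝 0) := by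
      convert tendsto_rpow_neg_atTop (show 0 < 1 + s - α by linarith) using 3
      ring
    have hprod := hdecay.mul (tendsto_rpow_mul_two_mul_rpow_sub_rpow_sub_rpow (-s))
    rw [zero_mul] at hprod
    refine hprod.congr' ?_
    filter_upwards [eventually_gt_atTop 0] with d hd
    rw [← mul_assoc, ← Real.rpow_add hd, show α - 1 - s + (2 - -s) = 1 + α by ring]
  have hpotential : Tendsto (fun d : ℝ => d ^ (1 + α) *
      (2 * d ^ (1 - α) - (d - 1 / 2) ^ (1 - α) - (d + 1 / 2) ^ (1 - α))) atTop
      (𝓝 (α * (1 - α) / 4)) := by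
    rw [show 1 + α = 2 - (1 - α) by ring,
      show α * (1 - α) / 4 = -((1 - α) * (1 - α - 1)) / 4 by ring]
    exact tendsto_rpow_mul_two_mul_rpow_sub_rpow_sub_rpow (1 - α)
  convert (hkernel.const_mul (2 / s)).add (hpotential.const_mul (c * ε / (1 - α))) using 2
  · simp only [fEL]; ring
  · field_simp [(sub_pos.2 hα).ne']
    ring

lemma eventually_pos_of_tendsto_rpow_mul {g : ℝ → ℝ} {r L : ℝ}
    (h : Tendsto (fun d : ℝ => d ^ r * g d) atTop (𝓝 L)) (hL : 0 < L) :
    ∀ᶠ d in atTop, 0 < g d := by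
  filter_upwards [h.eventually (eventually_gt_nhds hL), eventually_gt_atTop 0] with d hprod hd
  exact pos_of_mul_pos_right hprod (Real.rpow_pos_of_pos hd r).le

theorem stmt14 (s α c ε : ℝ) (hs : s ∈ Ioo (0 : ℝ) 1) (hα : α ∈ Ioo (0 : ℝ) 1)
    (hc : 0 < c) (hε : 0 < ε) :
    Tendsto (fun d : ℝ => d ^ (1 + α) * fEL s α c ε d) atTop (𝓝 (c * α * ε / 4)) ∧
    ∃ D : ℝ, 1 / 2 < D ∧ ∀ d : ℝ, D ≤ d → 0 < fEL s α c ε d := by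
  have hlim := tendsto_rpow_mul_fEL c ε hs.1 hα.2
  obtain ⟨D, hD⟩ := eventually_atTop.1 <|
    eventually_pos_of_tendsto_rpow_mul hlim (by have := hα.1; positivity)
  exact ⟨hlim, max D 1, lt_max_of_lt_right one_half_lt_one,
    fun d hd => hD d (le_of_max_le_left hd)⟩
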